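/- Let κ be an infinite regular cardinal and let T be a non-empty <κ-closed pruned subtree of ^{<κ}κ. Then N_t ∩ [T] is non-empty for every t ∈ T, and the closed set [T] is a retract of ^κκ. -/

import Mathlib

open Cardinal Set

noncomputable section

namespace GBaire

universe u

/-- The underlying well-ordered set of the cardinal `κ`, i.e. the type of ordinals `< κ`. -/
abbrev K (κ : Cardinal.{u}) : Type u := κ.ord.ToType

/-- The set `^{<κ}κ` of all functions from a proper initial segment of `κ` to `κ`. -/
abbrev PreFun (κ : Cardinal.{u}) : Type u := Σ α : K κ, ({β : K κ // β < α} → K κ)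

variable (κ : Cardinal.{u})

/-- The restriction `x ↾ α` of a function `x ∈ ^κκ` to the initial segment determined by `α`. -/
def resT (x : K κ → K κ) (α : K κ) : PreFun κ := ⟨α, fun β => x β.1⟩

/-- The restriction of `s ∈ ^{<κ}κ` to (the minimum of its domain and) `γ`.  When
`γ ≤ s.1` this is the restriction `s ↾ γ`; otherwise it equals `s`. -/
def cut (s : PreFun κ) (γ : K κ) : PreFun κ :=
  ⟨min γ s.1, fun β => s.2 ⟨β.1, lt_of_lt_of_le β.2 (min_le_right _ _)⟩⟩

/-- A subtree of `^{<κ}κ`: a set of elements of `^{<κ}κ` closed under restrictions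
to smaller ordinals. -/
def IsSubtree (T : Set (PreFun κ)) : Prop :=
  ∀ s ∈ T, ∀ γ : K κ, γ < s.1 → cut κ s γ ∈ T

/-- The `α`-th level `T(α)` of `T`. -/
def level (T : Set (PreFun κ)) (α : K κ) : Set (PreFun κ) := {s ∈ T | s.1 = α}

/-- The set `[T]` of cofinal branches of `T`, i.e. all `x ∈ ^κκ` all of whose
restrictions lie in `T`. -/
def branches (T : Set (PreFun κ)) : Set (K κ → K κ) := {x | ∀ α : K κ, resT κ x α ∈ T}

/-- `T` is a `κ`-Kurepa subtree of `^{<κ}κ`: a subtree all of whose levels are nonempty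
of cardinality `< κ` and with at least `κ⁺` many cofinal branches. -/
def IsKurepa (T : Set (PreFun κ)) : Prop :=
  IsSubtree κ T ∧ (∀ α : K κ, (level κ T α).Nonempty ∧ #(level κ T α) < κ) ∧
    Order.succ κ ≤ #(branches κ T)

/-- The basic open set `N_s = {x ∈ ^κκ | s ⊆ x}`. -/
def Nbhd (s : PreFun κ) : Set (K κ → K κ) := {x | resT κ x s.1 = s}

/-- The topology of the generalized Baire space `^κκ`, generated by the sets `N_s`. -/
def baire : TopologicalSpace (K κ → K κ) :=
  TopologicalSpace.generateFrom {U | ∃ s : PreFun κ, U = Nbhd κ s}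

/-- `X` is a continuous image of `^κκ`: there is a continuous surjection from `^κκ`
onto `X` (with the subspace topology). -/
def IsContImage (X : Set (K κ → K κ)) : Prop :=
  letI := baire κ
  ∃ f : (K κ → K κ) → X, Continuous f ∧ Function.Surjective f

/-- `X` is a retract of `^κκ`: there is a continuous `r : ^κκ → ^κκ` with range
contained in `X` that is the identity on `X`. -/
def IsRetract (X : Set (K κ → K κ)) : Prop :=
  letI := baire κ
  ∃ r : (K κ → K κ) → (K κ → K κ),
    Continuous r ∧ Set.range r ⊆ X ∧ ∀ x ∈ X, r x = x

/-- `y` is an isolated point of `Y ⊆ ^κκ`. -/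
def IsIsolatedIn (Y : Set (K κ → K κ)) (y : K κ → K κ) : Prop :=
  y ∈ Y ∧ ∃ α : K κ, Nbhd κ (resT κ y α) ∩ Y = {y}

/-- `T` is slim: `|T(α)| ≤ |α|` for all sufficiently large `α < κ`. -/
def IsSlim (T : Set (PreFun κ)) : Prop :=
  ∃ α₀ : K κ, ∀ α : K κ, α₀ ≤ α → #(level κ T α) ≤ #{β : K κ // β < α}

/-- `C ⊆ κ` is closed: it contains every least upper bound of a nonempty subset of `C`. -/
def ClosedIn (C : Set (K κ)) : Prop :=
  ∀ A ⊆ C, A.Nonempty → ∀ x : K κ, IsLUB A x → x ∈ C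

/-- `C ⊆ κ` is unbounded in `κ`. -/
def UnboundedIn (C : Set (K κ)) : Prop := ∀ x : K κ, ∃ y ∈ C, x < y

/-- `S ⊆ κ` is stationary in `κ`: it meets every closed unbounded subset of `κ`. -/
def Stationary (S : Set (K κ)) : Prop :=
  ∀ C : Set (K κ), ClosedIn κ C → UnboundedIn κ C → (S ∩ C).Nonempty

/-- `T` is stationary slim: `|T(α)| ≤ |α|` for stationarily many `α < κ`. -/
def StatSlim (T : Set (PreFun κ)) : Prop :=
  Stationary κ {α : K κ | #(level κ T α) ≤ #{β : K κ // β < α}}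

/-- `α` is a limit ordinal (as an element of `κ`): it is neither the least element
nor a successor. -/
def IsLimitElt (α : K κ) : Prop :=
  (∃ β : K κ, β < α) ∧ ∀ β : K κ, β < α → ∃ γ : K κ, β < γ ∧ γ < α

/-- The boundary `∂T` of a subtree `T`: the minimal elements of `^{<κ}κ \ T`. -/
def boundary (T : Set (PreFun κ)) : Set (PreFun κ) :=
  {t | t ∉ T ∧ ∀ γ : K κ, γ < t.1 → cut κ t γ ∈ T}

/-- `T` is superthin: for every limit ordinal `α < κ`, the set of elements of
`T ∪ ∂T` with domain `α` has cardinality `< κ`. -/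
def IsSuperthin (T : Set (PreFun κ)) : Prop :=
  ∀ α : K κ, IsLimitElt κ α → #{s ∈ T ∪ boundary κ T | s.1 = α} < κ

/-- `T` is pruned: every element of `T` has a proper extension in `T`. -/
def IsPruned (T : Set (PreFun κ)) : Prop :=
  ∀ s ∈ T, ∃ t ∈ T, s.1 < t.1 ∧ cut κ t s.1 = s

/-- `T` is `<κ`-closed: the union of every (strictly increasing with respect to proper
end-extension) sequence of elements of `T` indexed by an ordinal `< κ` again lies in `T`.
Here `u` is the union of the sequence `s` iff the domain of `u` is the least upper bound
of the domains of the `s ξ` and every `s ξ` is a restriction of `u`. -/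
def IsLtClosed (T : Set (PreFun κ)) : Prop :=
  ∀ (γ : K κ) (s : {ξ : K κ // ξ < γ} → PreFun κ),
    (∀ ξ ζ : {ξ : K κ // ξ < γ}, ξ < ζ → (s ξ).1 < (s ζ).1 ∧ cut κ (s ζ) (s ξ).1 = s ξ) →
    (∀ ξ, s ξ ∈ T) →
    ∀ u : PreFun κ, IsLUB (Set.range fun ξ => (s ξ).1) u.1 →
      (∀ ξ, cut κ u (s ξ).1 = s ξ) → u ∈ T

/-- `T` contains a Cantor subtree. -/
def HasCantorSubtree (T : Set (PreFun κ)) : Prop :=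
  ∃ (l : ℕ → K κ) (lam : K κ), StrictMono l ∧ IsLUB (Set.range l) lam ∧
    (level κ T lam).Nonempty ∧
    ∃ B ⊆ level κ T lam, ¬ B.Countable ∧
      ∀ n : ℕ, ((fun t => cut κ t (l n)) '' B).Countable

/-- proper end-extension on `^{<κ}κ`. -/
def pext (s t : PreFun κ) : Prop := s.1 < t.1 ∧ cut κ t s.1 = s

/-- A set `A ⊆ ^{<κ}κ`, regarded as a tree under proper end-extension, is trivially
coherent: it is order-isomorphic to a subtree of `^{<λ}2` (for `λ` its height) all of
whose elements `t` satisfy that `t⁻¹{0}` is finite.  (Here the comparison tree is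
realized as a subtree `U` of `^{<κ}κ` taking only the values `0` and `1`, i.e. values
with at most one predecessor, such that each `u ∈ U` takes the value `0`, i.e. the
value with no predecessor, only finitely often.) -/
def TriviallyCoherent (A : Set (PreFun κ)) : Prop :=
  ∃ U : Set (PreFun κ),
    IsSubtree κ U ∧
    (∀ u ∈ U, ∀ β : {b : K κ // b < u.1}, #{γ : K κ // γ < u.2 β} ≤ 1) ∧
    (∀ u ∈ U, {β : {b : K κ // b < u.1} | ¬ ∃ γ : K κ, γ < u.2 β}.Finite) ∧
    ∃ f : A → U, Function.Bijective f ∧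
      ∀ s t : A, pext κ s.1 t.1 ↔ pext κ (f s).1 (f t).1

/-- `T` is locally coherent: each of its proper initial segments `T ∩ ^{<α}κ` is
trivially coherent. -/
def LocallyCoherent (T : Set (PreFun κ)) : Prop :=
  ∀ α : K κ, TriviallyCoherent κ {s ∈ T | s.1 < α}

end GBaire

namespace GBaire

/-! A node `t` of `T` is extended to a branch by a transfinite recursion of length `κ`: at each
stage the previous nodes are glued together, the union lies in `T` by `<κ`-closure (regularity
keeps the union's domain below `κ`), and pruning extends it properly.

For the retraction, fix such a branch `b t` through every node `t`. If `x ∉ [T]`, the levels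
`α` with `x ↾ α ∈ T` form an initial segment of `κ` that is closed under suprema, so it has a
largest element `β`, and `x` is sent to `b (x ↾ β)`. This map is constant on `N_{x ↾ δ}` for any
`δ > β`, and near a branch it agrees with its argument on long initial segments. -/

universe u

open scoped Topology

variable {κ : Cardinal.{u}} {T : Set (PreFun κ)}

theorem mk_Iio_lt (α : K κ) : #{β : K κ // β < α} < κ := by
  rw [← Ordinal.card_typein (α := K κ) (r := (· < ·)) α]
  exact Cardinal.lt_ord.mp (Ordinal.typein_lt_self α)

theorem exists_forall_lt_of_mk_lt (hreg : κ.IsRegular) {s : Set (K κ)} (hs : #s < κ) :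
    ∃ b, ∀ a ∈ s, a < b :=
  not_isCofinal_iff.1 fun hcof =>
    (Order.cof_le hcof).not_gt (by rwa [Ordinal.cof_toType, hreg.cof_ord])

theorem exists_gt_of_isRegular (hreg : κ.IsRegular) (a : K κ) : ∃ b, a < b := by
  obtain ⟨b, hb⟩ := exists_forall_lt_of_mk_lt hreg (s := {a})
    (by simpa using one_lt_aleph0.trans_le hreg.aleph0_le)
  exact ⟨b, hb a rfl⟩

theorem exists_isLUB_of_mk_lt (hreg : κ.IsRegular) {s : Set (K κ)} (hs : #s < κ) :
    ∃ b, IsLUB s b := by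
  obtain ⟨b, hb⟩ := exists_forall_lt_of_mk_lt hreg hs
  have hbdd : BddAbove s := ⟨b, fun a ha => (hb a ha).le⟩
  exact ⟨wellFounded_lt.min (upperBounds s) hbdd, wellFounded_lt.min_mem _ hbdd,
    fun c hc => not_lt.1 (wellFounded_lt.not_lt_min _ hc)⟩

theorem PreFun.ext_apply {s t : PreFun κ} (h₁ : s.1 = t.1)
    (h₂ : ∀ β (hs : β < s.1) (ht : β < t.1), s.2 ⟨β, hs⟩ = t.2 ⟨β, ht⟩) : s = t := by
  obtain ⟨a, f⟩ := s
  obtain ⟨b, g⟩ := t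
  subst h₁
  simp only [Sigma.mk.inj_iff, heq_eq_eq, true_and]
  exact funext fun β => h₂ β.1 β.2 β.2

theorem PreFun.apply_congr {s t : PreFun κ} (h : s = t) {β : K κ} (hs : β < s.1)
    (ht : β < t.1) : s.2 ⟨β, hs⟩ = t.2 ⟨β, ht⟩ := by
  subst h; rfl

theorem cut_fst (s : PreFun κ) (γ : K κ) : (cut κ s γ).1 = min γ s.1 := rfl

theorem cut_resT (x : K κ → K κ) (α γ : K κ) : cut κ (resT κ x α) γ = resT κ x (min γ α) := rfl

theorem cut_cut (s : PreFun κ) {γ δ : K κ} (h : δ ≤ γ) : cut κ (cut κ s γ) δ = cut κ s δ :=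
  PreFun.ext_apply (by simp only [cut_fst, ← min_assoc, min_eq_left h]) fun _ _ _ => rfl

theorem cut_of_le {s : PreFun κ} {γ : K κ} (h : s.1 ≤ γ) : cut κ s γ = s :=
  PreFun.ext_apply (min_eq_right h) fun _ _ _ => rfl

theorem le_of_cut_eq {s t : PreFun κ} (h : cut κ s t.1 = t) : t.1 ≤ s.1 := by
  rw [← h, cut_fst]
  exact min_le_right _ _

theorem cut_trans {s t u : PreFun κ} (hst : cut κ s t.1 = t) (htu : cut κ t u.1 = u) :
    cut κ s u.1 = u := by
  rw [← cut_cut s (le_of_cut_eq htu), hst, htu]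

theorem apply_of_cut_eq {s t : PreFun κ} (h : cut κ s t.1 = t) {β : K κ} (hs : β < s.1)
    (ht : β < t.1) : s.2 ⟨β, hs⟩ = t.2 ⟨β, ht⟩ :=
  PreFun.apply_congr h (lt_min ht hs) ht

theorem resT_eq_resT_of_le {x y : K κ → K κ} {α γ : K κ} (h : resT κ y α = resT κ x α)
    (hγ : γ ≤ α) : resT κ y γ = resT κ x γ := by
  simpa only [cut_resT, min_eq_left hγ] using congrArg (cut κ · γ) h

def Compatible {ι : Type*} (p : ι → PreFun κ) : Prop :=
  ∀ i j β (hi : β < (p i).1) (hj : β < (p j).1), (p i).2 ⟨β, hi⟩ = (p j).2 ⟨β, hj⟩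

theorem compatible_of_pext {ι : Type*} [LinearOrder ι] {p : ι → PreFun κ}
    (h : ∀ i j, i < j → pext κ (p i) (p j)) : Compatible p := by
  intro i j β hi hj
  rcases lt_trichotomy i j with hij | rfl | hij
  · exact (apply_of_cut_eq (h i j hij).2 hj hi).symm
  · rfl
  · exact apply_of_cut_eq (h j i hij).2 hi hj

open Classical in
def glue {ι : Type*} (p : ι → PreFun κ) (β : K κ) : K κ :=
  if h : ∃ i, β < (p i).1 then (p h.choose).2 ⟨β, h.choose_spec⟩ else β

theorem resT_glue {ι : Type*} {p : ι → PreFun κ} (hp : Compatible p) {i : ι} {α : K κ}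
    (hα : α ≤ (p i).1) : resT κ (glue p) α = cut κ (p i) α := by
  refine PreFun.ext_apply (min_eq_left hα).symm fun β hβ _ => ?_
  have h : ∃ j, β < (p j).1 := ⟨i, lt_of_lt_of_le hβ hα⟩
  show glue p β = _
  rw [glue, dif_pos h]
  exact hp _ _ _ _ _

theorem exists_pext_of_chain (hreg : κ.IsRegular) (hclosed : IsLtClosed κ T)
    (hpruned : IsPruned κ T) {t : PreFun κ} (ht : t ∈ T) {α : K κ}
    (p : {ξ : K κ // ξ < α} → PreFun κ) (hchain : ∀ ξ ζ, ξ < ζ → pext κ (p ξ) (p ζ))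
    (hpT : ∀ ξ, p ξ ∈ T) (hpt : ∀ ξ, cut κ (p ξ) t.1 = t) :
    ∃ s ∈ T, cut κ s t.1 = t ∧ ∀ ξ, pext κ (p ξ) s := by
  rcases isEmpty_or_nonempty {ξ : K κ // ξ < α} with hα | hα
  · exact ⟨t, ht, cut_of_le le_rfl, isEmptyElim⟩
  obtain ⟨ξ₀⟩ := hα
  obtain ⟨l, hl⟩ := exists_isLUB_of_mk_lt hreg (s := range fun ξ => (p ξ).1)
    (mk_range_le.trans_lt (mk_Iio_lt α))
  have hle : ∀ ξ, (p ξ).1 ≤ l := fun ξ => hl.1 ⟨ξ, rfl⟩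
  have hcut : ∀ ξ, cut κ (resT κ (glue p) l) (p ξ).1 = p ξ := fun ξ => by
    rw [cut_resT, min_eq_left (hle ξ), resT_glue (compatible_of_pext hchain) le_rfl,
      cut_of_le le_rfl]
  obtain ⟨s, hsT, hls, hsl⟩ := hpruned _ (hclosed α p hchain hpT _ hl hcut)
  exact ⟨s, hsT, cut_trans (cut_trans hsl (hcut ξ₀)) (hpt ξ₀),
    fun ξ => ⟨lt_of_le_of_lt (hle ξ) hls, cut_trans hsl (hcut ξ)⟩⟩

open Classical in
def branchApprox (T : Set (PreFun κ)) (t : PreFun κ) : K κ → PreFun κ :=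
  wellFounded_lt.fix fun α g =>
    if h : ∃ s ∈ T, cut κ s t.1 = t ∧ ∀ ξ (hξ : ξ < α), pext κ (g ξ hξ) s then h.choose else t

open Classical in
theorem branchApprox_eq (t : PreFun κ) (α : K κ) :
    branchApprox T t α =
      if h : ∃ s ∈ T, cut κ s t.1 = t ∧ ∀ ξ < α, pext κ (branchApprox T t ξ) s then h.choose
      else t :=
  WellFounded.fix_eq _ _ _

theorem branchApprox_spec (hreg : κ.IsRegular) (hclosed : IsLtClosed κ T)
    (hpruned : IsPruned κ T) {t : PreFun κ} (ht : t ∈ T) (α : K κ) :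
    branchApprox T t α ∈ T ∧ cut κ (branchApprox T t α) t.1 = t ∧
      ∀ ξ < α, pext κ (branchApprox T t ξ) (branchApprox T t α) := by
  induction α using WellFoundedLT.induction with
  | _ α ih =>
  have h : ∃ s ∈ T, cut κ s t.1 = t ∧ ∀ ξ < α, pext κ (branchApprox T t ξ) s := by
    obtain ⟨s, hsT, hst, hs⟩ := exists_pext_of_chain hreg hclosed hpruned ht
      (fun ξ : {ξ // ξ < α} => branchApprox T t ξ) (fun ξ ζ h => (ih ζ ζ.2).2.2 ξ h)
      (fun ξ => (ih ξ ξ.2).1) (fun ξ => (ih ξ ξ.2).2.1)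
    exact ⟨s, hsT, hst, fun ξ hξ => hs ⟨ξ, hξ⟩⟩
  rw [branchApprox_eq, dif_pos h]
  exact h.choose_spec

theorem nonempty_nbhd_inter_branches (hreg : κ.IsRegular) (hsub : IsSubtree κ T)
    (hclosed : IsLtClosed κ T) (hpruned : IsPruned κ T) {t : PreFun κ} (ht : t ∈ T) :
    (Nbhd κ t ∩ branches κ T).Nonempty := by
  set g := branchApprox T t
  have hg := branchApprox_spec hreg hclosed hpruned ht
  have hmono : StrictMono fun α => (g α).1 := fun ξ ζ h => ((hg ζ).2.2 ξ h).1
  have hglue : ∀ {α ζ : K κ}, α ≤ (g ζ).1 → resT κ (glue g) α = cut κ (g ζ) α :=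
    resT_glue (compatible_of_pext fun ξ ζ h => (hg ζ).2.2 ξ h)
  refine ⟨glue g, ?_, fun α => ?_⟩
  · show resT κ (glue g) t.1 = t
    rw [hglue (le_of_cut_eq (hg t.1).2.1), (hg t.1).2.1]
  · obtain ⟨ζ, hζ⟩ := exists_gt_of_isRegular hreg α
    have hα : α < (g ζ).1 := lt_of_lt_of_le hζ hmono.le_apply
    show resT κ (glue g) α ∈ T
    rw [hglue hα.le]
    exact hsub _ (hg ζ).1 α hα

def levelsIn (T : Set (PreFun κ)) (x : K κ → K κ) : Set (K κ) := {α | resT κ x α ∈ T}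

theorem mem_levelsIn_of_le (hsub : IsSubtree κ T) {x : K κ → K κ} {α γ : K κ}
    (hα : α ∈ levelsIn T x) (hγ : γ ≤ α) : γ ∈ levelsIn T x := by
  rcases hγ.eq_or_lt with rfl | hγ
  · exact hα
  · simpa only [levelsIn, mem_ofPred_eq, cut_resT, min_eq_left hγ.le] using hsub _ hα γ hγ

theorem mem_levelsIn_of_isLUB (hclosed : IsLtClosed κ T) {x : K κ → K κ} {δ : K κ}
    (hδ : IsLUB (Iio δ) δ) (h : ∀ ξ < δ, ξ ∈ levelsIn T x) : δ ∈ levelsIn T x := by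
  have hrange : (range fun ξ : {ξ // ξ < δ} => (resT κ x ξ).1) = Iio δ :=
    Subtype.range_coe_subtype
  exact hclosed δ (fun ξ => resT κ x ξ)
    (fun ξ ζ hξζ => ⟨hξζ, congrArg (resT κ x) (min_eq_left hξζ.le)⟩) (fun ξ => h ξ ξ.2) _
    (hrange ▸ hδ) (fun ξ => congrArg (resT κ x) (min_eq_left ξ.2.le))

theorem exists_isGreatest_levelsIn (hsub : IsSubtree κ T) (hclosed : IsLtClosed κ T)
    {x : K κ → K κ} (hx : x ∉ branches κ T) : ∃ β, IsGreatest (levelsIn T x) β := by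
  have hbad : (levelsIn T x)ᶜ.Nonempty := not_forall.1 hx
  set δ := wellFounded_lt.min _ hbad
  have hδ : δ ∉ levelsIn T x := wellFounded_lt.min_mem _ hbad
  have hlt : ∀ ξ < δ, ξ ∈ levelsIn T x := fun ξ hξ =>
    not_not.1 fun h => wellFounded_lt.not_lt_min _ h hξ
  by_contra! hno
  refine hδ (mem_levelsIn_of_isLUB hclosed ⟨fun _ h => le_of_lt h, fun c hc => ?_⟩ hlt)
  by_contra! hcδ
  have hc' : c ∉ upperBounds (levelsIn T x) := fun h => hno c ⟨hlt c hcδ, h⟩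
  simp only [mem_upperBounds, not_forall, not_le] at hc'
  obtain ⟨γ, hγ, hcγ⟩ := hc'
  have hγδ : γ < δ := lt_of_not_ge fun hδγ => hδ (mem_levelsIn_of_le hsub hγ hδγ)
  exact (hc hγδ).not_gt hcγ

open Classical in
def retraction (T : Set (PreFun κ)) (b : PreFun κ → K κ → K κ) (x : K κ → K κ) :
    K κ → K κ :=
  if h : ∃ β, IsGreatest (levelsIn T x) β then b (resT κ x h.choose) else x

variable {b : PreFun κ → K κ → K κ}

theorem retraction_of_isGreatest {x : K κ → K κ} {β : K κ} (h : IsGreatest (levelsIn T x) β) :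
    retraction T b x = b (resT κ x β) := by
  have hex : ∃ β, IsGreatest (levelsIn T x) β := ⟨β, h⟩
  rw [retraction, dif_pos hex, hex.choose_spec.unique h]

theorem retraction_of_mem_branches (hreg : κ.IsRegular) {x : K κ → K κ}
    (hx : x ∈ branches κ T) : retraction T b x = x :=
  dif_neg fun ⟨β, hβ⟩ =>
    let ⟨γ, hγ⟩ := exists_gt_of_isRegular hreg β
    (hβ.2 (hx γ)).not_gt hγ

theorem retraction_mem_branches (hsub : IsSubtree κ T) (hclosed : IsLtClosed κ T)
    (hb : ∀ t ∈ T, b t ∈ Nbhd κ t ∩ branches κ T) (x : K κ → K κ) :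
    retraction T b x ∈ branches κ T := by
  by_cases hex : ∃ β, IsGreatest (levelsIn T x) β
  · obtain ⟨β, hβ⟩ := hex
    rw [retraction_of_isGreatest hβ]
    exact (hb _ hβ.1).2
  · rw [retraction, dif_neg hex]
    exact not_not.1 (mt (exists_isGreatest_levelsIn hsub hclosed) hex)

theorem resT_retraction (hb : ∀ t ∈ T, b t ∈ Nbhd κ t ∩ branches κ T) {x : K κ → K κ}
    {γ : K κ} (h : γ ∈ levelsIn T x) :
    resT κ (retraction T b x) γ = resT κ x γ := by
  by_cases hex : ∃ β, IsGreatest (levelsIn T x) β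
  · obtain ⟨β, hβ⟩ := hex
    rw [retraction_of_isGreatest hβ]
    exact resT_eq_resT_of_le (hb _ hβ.1).1 (hβ.2 h)
  · rw [retraction, dif_neg hex]

theorem retraction_eq_of_isGreatest (hsub : IsSubtree κ T) {x y : K κ → K κ} {β δ : K κ}
    (hβ : IsGreatest (levelsIn T x) β) (hβδ : β < δ) (hy : resT κ y δ = resT κ x δ) :
    retraction T b y = retraction T b x := by
  have hagree : ∀ α ≤ δ, α ∈ levelsIn T y ↔ α ∈ levelsIn T x := fun α hα => by
    simp only [levelsIn, mem_ofPred_eq, resT_eq_resT_of_le hy hα]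
  have hβy : IsGreatest (levelsIn T y) β := by
    refine ⟨(hagree β hβδ.le).2 hβ.1, fun α hα => ?_⟩
    rcases le_or_gt α δ with hαδ | hδα
    · exact hβ.2 ((hagree α hαδ).1 hα)
    · exact absurd (hβ.2 ((hagree δ le_rfl).1 (mem_levelsIn_of_le hsub hα hδα.le))) hβδ.not_ge
  rw [retraction_of_isGreatest hβy, retraction_of_isGreatest hβ, resT_eq_resT_of_le hy hβδ.le]

theorem isOpen_of_forall_nbhd_subset {S : Set (K κ → K κ)}
    (h : ∀ x ∈ S, ∃ α, Nbhd κ (resT κ x α) ⊆ S) : IsOpen[baire κ] S :=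
  letI := baire κ
  isOpen_iff_forall_mem_open.2 fun x hx =>
    let ⟨_, hα⟩ := h x hx
    ⟨_, hα, TopologicalSpace.isOpen_generateFrom_of_mem ⟨_, rfl⟩, rfl⟩

theorem continuous_retraction (hreg : κ.IsRegular) (hsub : IsSubtree κ T)
    (hclosed : IsLtClosed κ T) (hb : ∀ t ∈ T, b t ∈ Nbhd κ t ∩ branches κ T) :
    Continuous[baire κ, baire κ] (retraction T b) := by
  refine continuous_generateFrom_iff.2 ?_
  rintro _ ⟨s, rfl⟩
  refine isOpen_of_forall_nbhd_subset fun x (hx : resT κ (retraction T b x) s.1 = s) => ?_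
  by_cases hex : ∃ β, IsGreatest (levelsIn T x) β
  · obtain ⟨β, hβ⟩ := hex
    obtain ⟨δ, hβδ⟩ := exists_gt_of_isRegular hreg β
    refine ⟨δ, fun y (hy : resT κ y δ = resT κ x δ) => ?_⟩
    show resT κ (retraction T b y) s.1 = s
    rwa [retraction_eq_of_isGreatest hsub hβ hβδ hy]
  · have hxT : x ∈ branches κ T := not_not.1 (mt (exists_isGreatest_levelsIn hsub hclosed) hex)
    obtain ⟨γ, hγ⟩ := exists_gt_of_isRegular hreg s.1
    refine ⟨γ, fun y (hy : resT κ y γ = resT κ x γ) => ?_⟩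
    have hyγ : γ ∈ levelsIn T y := by
      show resT κ y γ ∈ T
      rw [hy]
      exact hxT γ
    show resT κ (retraction T b y) s.1 = s
    rwa [resT_eq_resT_of_le ((resT_retraction hb hyγ).trans hy) hγ.le,
      ← retraction_of_mem_branches hreg hxT]

theorem isRetract_branches (hreg : κ.IsRegular) (hsub : IsSubtree κ T)
    (hclosed : IsLtClosed κ T) (hb : ∀ t ∈ T, b t ∈ Nbhd κ t ∩ branches κ T) :
    IsRetract κ (branches κ T) :=
  ⟨retraction T b, continuous_retraction hreg hsub hclosed hb,
    range_subset_iff.2 (retraction_mem_branches hsub hclosed hb),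
    fun _ => retraction_of_mem_branches hreg⟩

theorem retract_of_ltClosed_pruned_general
    (κ : Cardinal.{u}) (hreg : κ.IsRegular)
    (T : Set (PreFun κ)) (hsub : IsSubtree κ T)
    (hclosed : IsLtClosed κ T) (hpruned : IsPruned κ T) :
    (∀ t ∈ T, (Nbhd κ t ∩ branches κ T).Nonempty) ∧ IsRetract κ (branches κ T) := by
  have hbranch : ∀ t ∈ T, (Nbhd κ t ∩ branches κ T).Nonempty :=
    fun _ => nonempty_nbhd_inter_branches hreg hsub hclosed hpruned
  refine ⟨hbranch, ?_⟩
  have : Nonempty (K κ → K κ) := ⟨id⟩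
  choose! b hb using hbranch
  exact isRetract_branches hreg hsub hclosed hb

/-- If `κ` is an infinite regular cardinal and `T` is a non-empty
`<κ`-closed pruned subtree of `^{<κ}κ`, then `N_t ∩ [T] ≠ ∅` for every `t ∈ T` and the
closed set `[T]` is a retract of `^κκ`. -/
theorem retract_of_ltClosed_pruned
    (κ : Cardinal.{u}) (hreg : κ.IsRegular)
    (T : Set (PreFun κ)) (hne : T.Nonempty) (hsub : IsSubtree κ T)
    (hclosed : IsLtClosed κ T) (hpruned : IsPruned κ T) :
    (∀ t ∈ T, (Nbhd κ t ∩ branches κ T).Nonempty) ∧ IsRetract κ (branches κ T) :=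
  retract_of_ltClosed_pruned_general κ hreg T hsub hclosed hpruned

end GBaire
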